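/- Let Θ = {θ_j^I} be a suitable set of moduli of continuity and let {ν_n}_{n≥0} be parametric b-measures on ℝ^N with respect to {ω_j}_{j≥1} admitting, for each j ≥ 1, m-bounds {m_j^n}_{n≥0} that form an equicontinuous family (for every ε > 0 there is δ > 0 with m_j^n([s,t]) < ε whenever 0 ≤ t−s < δ, for all n ≥ 0). If ν_n → ν₀ in σ_Θ and t_n → t₀ in ℝ, then ν_n·t_n → ν₀·t₀ in σ_Θ, where (ν·t)_y(A) = ν_y(A + t); that is, for every compact interval I with rational endpoints and every j ∈ ℕ, lim_{n→∞} sup_{y(·)∈𝒦_j^I} |∫_I d(ν_n·t_n)_{y(s)} − ∫_I d(ν₀·t₀)_{y(s)}| = 0. -/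

import Mathlib

open MeasureTheory Set Filter Topology

/-- A (continuous real) b-measure: a set function on the bounded Borel subsets of `ℝ`
which vanishes on `∅`, is countably additive over countable pairwise disjoint families
of bounded Borel sets with bounded union, and vanishes on singletons. -/
structure IsBMeasure (μ : Set ℝ → ℝ) : Prop where
  empty : μ ∅ = 0
  countably_additive : ∀ A : ℕ → Set ℝ, (∀ n, MeasurableSet (A n)) →
    (∀ n, Bornology.IsBounded (A n)) → Pairwise (Function.onFun Disjoint A) →
    Bornology.IsBounded (⋃ n, A n) →
    HasSum (fun n => μ (A n)) (μ (⋃ n, A n))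
  singleton : ∀ t : ℝ, μ {t} = 0

/-- A locally finite atomless Borel measure on `ℝ`. -/
def GoodMeasure (m : Measure ℝ) : Prop :=
  IsLocallyFiniteMeasure m ∧ ∀ t : ℝ, m {t} = 0

/-- `P` is a finite Borel partition of `A`. -/
def IsBorelPartition (A : Set ℝ) {n : ℕ} (P : Fin n → Set ℝ) : Prop :=
  (∀ i, MeasurableSet (P i)) ∧ Pairwise (Function.onFun Disjoint P) ∧ (⋃ i, P i) = A

/-- `|μ| ≤ m` : total-variation bound of the set function `μ` by the measure `m`,
expressed through finite Borel partitions of bounded Borel sets. -/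
def TVLE (μ : Set ℝ → ℝ) (m : Measure ℝ) : Prop :=
  ∀ A : Set ℝ, Bornology.IsBounded A → MeasurableSet A →
    ∀ (n : ℕ) (P : Fin n → Set ℝ), IsBorelPartition A P →
      ∑ i, |μ (P i)| ≤ (m A).toReal

/-- Partition-sum bound `Σ |μ₁(Aᵢ) - μ₂(Aᵢ)| ≤ c · l(A)` for the difference of two
set functions, over finite Borel partitions of bounded Borel sets. -/
def DiffLE (μ₁ μ₂ : Set ℝ → ℝ) (c : ℝ) (l : Measure ℝ) : Prop :=
  ∀ A : Set ℝ, Bornology.IsBounded A → MeasurableSet A →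
    ∀ (n : ℕ) (P : Fin n → Set ℝ), IsBorelPartition A P →
      ∑ i, |μ₁ (P i) - μ₂ (P i)| ≤ c * (l A).toReal

variable {E : Type*} [NormedAddCommGroup E]

/-- `m` is an m-bound of `ν` on the closed ball of radius `j`. -/
def HasMBound (ν : E → Set ℝ → ℝ) (j : ℕ) (m : Measure ℝ) : Prop :=
  GoodMeasure m ∧ ∀ y : E, ‖y‖ ≤ (j : ℝ) → TVLE (ν y) m

/-- `l` is an l-bound of `ν` on the closed ball of radius `j`, for the modulus `ω`. -/
def HasLBound (ω : ℝ → ℝ) (ν : E → Set ℝ → ℝ) (j : ℕ) (l : Measure ℝ) : Prop :=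
  GoodMeasure l ∧ ∀ y₁ y₂ : E, ‖y₁‖ ≤ (j : ℝ) → ‖y₂‖ ≤ (j : ℝ) →
    DiffLE (ν y₁) (ν y₂) (ω ‖y₁ - y₂‖) l

/-- A non-decreasing family of moduli of continuity `{ω_j}`. -/
structure IsModulusFamily (ω : ℕ → ℝ → ℝ) : Prop where
  continuousOn : ∀ j, ContinuousOn (ω j) (Ici 0)
  monotoneOn : ∀ j, MonotoneOn (ω j) (Ici 0)
  map_zero : ∀ j, ω j 0 = 0
  nonneg : ∀ j x, 0 ≤ x → 0 ≤ ω j x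
  mono_index : ∀ j x, 0 ≤ x → ω j x ≤ ω (j + 1) x

/-- A parametric b-measure on `E` with respect to the family of moduli `ω`. -/
def IsParamBMeasure (ω : ℕ → ℝ → ℝ) (ν : E → Set ℝ → ℝ) : Prop :=
  (∀ y, IsBMeasure (ν y)) ∧
    ∀ j : ℕ, 1 ≤ j → ∃ m l : Measure ℝ, HasMBound ν j m ∧ HasLBound (ω j) ν j l

/-- A tagged partition of `[a,b]`. -/
structure TaggedPartition (a b : ℝ) where
  k : ℕ
  k_pos : 0 < k
  t : ℕ → ℝ
  tag : ℕ → ℝ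
  left : t 0 = a
  right : t k = b
  lt : ∀ i < k, t i < t (i + 1)
  tag_mem : ∀ i < k, tag i ∈ Set.Icc (t i) (t (i + 1))

/-- The mesh of the tagged partition is `< δ`. -/
def TaggedPartition.MeshLT {a b : ℝ} (P : TaggedPartition a b) (δ : ℝ) : Prop :=
  ∀ i < P.k, P.t (i + 1) - P.t i < δ

/-- The Riemann sum of the parametric b-measure `ν` along the curve `y` over the
tagged partition `P`. -/
def RiemannSum (ν : E → Set ℝ → ℝ) (y : ℝ → E) {a b : ℝ} (P : TaggedPartition a b) : ℝ :=
  ∑ i ∈ Finset.range P.k, ν (y (P.tag i)) (Set.Icc (P.t i) (P.t (i + 1)))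

/-- `L = ∫_a^b dν_{y(s)}` : `L` is the limit of the Riemann sums of `ν` along `y`
over tagged partitions of `[a,b]` as the mesh tends to `0`. -/
def IsCurveIntegral (ν : E → Set ℝ → ℝ) (y : ℝ → E) (a b : ℝ) (L : ℝ) : Prop :=
  ∀ ε > 0, ∃ δ > 0, ∀ P : TaggedPartition a b, P.MeshLT δ → |L - RiemannSum ν y P| < ε

/-- A suitable set of moduli of continuity `Θ = {θ_j^{[q₁,q₂]}}`. -/
structure IsSuitableModuli (Θ : ℕ → ℚ → ℚ → ℝ → ℝ) : Prop where
  continuousOn : ∀ (j : ℕ) (q₁ q₂ : ℚ), q₁ < q₂ → ContinuousOn (Θ j q₁ q₂) (Ici 0)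
  monotoneOn : ∀ (j : ℕ) (q₁ q₂ : ℚ), q₁ < q₂ → MonotoneOn (Θ j q₁ q₂) (Ici 0)
  map_zero : ∀ (j : ℕ) (q₁ q₂ : ℚ), q₁ < q₂ → Θ j q₁ q₂ 0 = 0
  nonneg : ∀ (j : ℕ) (q₁ q₂ : ℚ) (x : ℝ), q₁ < q₂ → 0 ≤ x → 0 ≤ Θ j q₁ q₂ x
  mono : ∀ (j₁ j₂ : ℕ) (q₁ q₂ p₁ p₂ : ℚ), j₁ ≤ j₂ → q₁ ≤ p₁ → p₁ < p₂ → p₂ ≤ q₂ →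
    ∀ x : ℝ, 0 ≤ x → Θ j₁ p₁ p₂ x ≤ Θ j₂ q₁ q₂ x

/-- The set `𝒦_j^I` of continuous functions `y : I → E`, `I = [q₁,q₂]`, bounded by `j`
and admitting `θ_j^I` as modulus of continuity. -/
def KSet (E : Type*) [NormedAddCommGroup E] (Θ : ℕ → ℚ → ℚ → ℝ → ℝ)
    (j : ℕ) (q₁ q₂ : ℚ) : Set (ℝ → E) :=
  {y | ContinuousOn y (Set.Icc (q₁ : ℝ) (q₂ : ℝ)) ∧
    (∀ t ∈ Set.Icc (q₁ : ℝ) (q₂ : ℝ), ‖y t‖ ≤ (j : ℝ)) ∧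
    ∀ t₁ ∈ Set.Icc (q₁ : ℝ) (q₂ : ℝ), ∀ t₂ ∈ Set.Icc (q₁ : ℝ) (q₂ : ℝ),
      ‖y t₁ - y t₂‖ ≤ Θ j q₁ q₂ |t₁ - t₂|}

/-- Convergence `ν_n → ν₀` in the topology `σ_Θ` : the integrals along curves of
`𝒦_j^I` converge uniformly, for every `j` and every compact interval `I` with
rational endpoints. -/
def SigmaThetaTendsto {E : Type*} [NormedAddCommGroup E] (Θ : ℕ → ℚ → ℚ → ℝ → ℝ)
    (ν : ℕ → E → Set ℝ → ℝ) (ν₀ : E → Set ℝ → ℝ) : Prop :=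
  ∀ (j : ℕ) (q₁ q₂ : ℚ), q₁ < q₂ → ∀ ε > 0, ∃ n₀ : ℕ, ∀ n ≥ n₀,
    ∀ y ∈ KSet E Θ j q₁ q₂, ∀ L L₀ : ℝ,
      IsCurveIntegral (ν n) y (q₁ : ℝ) (q₂ : ℝ) L →
      IsCurveIntegral ν₀ y (q₁ : ℝ) (q₂ : ℝ) L₀ → |L - L₀| < ε

/-- The time-translate `ν·t` of a parametric b-measure: `(ν·t)_y(A) = ν_y(A + t)`. -/
def BTranslate (ν : E → Set ℝ → ℝ) (t : ℝ) : E → Set ℝ → ℝ :=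
  fun y A => ν y ((fun s => s + t) '' A)

/-- The time-translate `m·t` of a Borel measure: `(m·t)(A) = m(A + t)`. -/
noncomputable def MTranslate (m : Measure ℝ) (t : ℝ) : Measure ℝ :=
  Measure.map (fun s => s - t) m

/-- An N-dimensional parametric b-measure on `E` with common m-bounds `m j` and
common Lipschitz l-bounds `l j`. -/
def IsNDimParamBMeasure {M : ℕ} (νbar : Fin M → E → Set ℝ → ℝ)
    (m l : ℕ → Measure ℝ) : Prop :=
  (∀ i y, IsBMeasure (νbar i y)) ∧
    ∀ j : ℕ, 1 ≤ j → GoodMeasure (m j) ∧ GoodMeasure (l j) ∧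
      (∀ i, ∀ y : E, ‖y‖ ≤ (j : ℝ) → TVLE (νbar i y) (m j)) ∧
      (∀ i, ∀ y₁ y₂ : E, ‖y₁‖ ≤ (j : ℝ) → ‖y₂‖ ≤ (j : ℝ) →
        DiffLE (νbar i y₁) (νbar i y₂) ‖y₁ - y₂‖ (l j))

/-- The oriented curve integral: `∫_b^a := -∫_a^b`. -/
def IsSignedCurveIntegral (ν : E → Set ℝ → ℝ) (y : ℝ → E) (a b : ℝ) (L : ℝ) : Prop :=
  (a ≤ b ∧ IsCurveIntegral ν y a b L) ∨ (b < a ∧ IsCurveIntegral ν y b a (-L))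

/-- `y` is a solution on `S` of the Cauchy problem `y' = ν̄_y`, `y(t₀) = y₀`, for the
N-dimensional parametric b-measure `ν̄`: componentwise,
`y_i(t) = y_{0,i} + ∫_{t₀}^t dν^i_{y(s)}`. -/
def IsSolutionOn {M : ℕ} (νbar : Fin M → EuclideanSpace ℝ (Fin M) → Set ℝ → ℝ)
    (t₀ : ℝ) (y₀ : EuclideanSpace ℝ (Fin M)) (S : Set ℝ)
    (y : ℝ → EuclideanSpace ℝ (Fin M)) : Prop :=
  t₀ ∈ S ∧ y t₀ = y₀ ∧ ContinuousOn y S ∧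
    ∀ t ∈ S, ∀ i : Fin M, IsSignedCurveIntegral (νbar i) y t₀ t (y t i - y₀ i)

/-- `y` is the maximal (noncontinuable) solution, defined on the open interval `S`:
every solution on an interval containing `t₀` is a restriction of `y`. -/
def IsMaximalSolution {M : ℕ} (νbar : Fin M → EuclideanSpace ℝ (Fin M) → Set ℝ → ℝ)
    (t₀ : ℝ) (y₀ : EuclideanSpace ℝ (Fin M)) (S : Set ℝ)
    (y : ℝ → EuclideanSpace ℝ (Fin M)) : Prop :=
  IsSolutionOn νbar t₀ y₀ S y ∧ IsOpen S ∧ S.OrdConnected ∧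
    ∀ S' : Set ℝ, S'.OrdConnected → ∀ z, IsSolutionOn νbar t₀ y₀ S' z →
      S' ⊆ S ∧ Set.EqOn z y S'



/-!
Extend a curve `y ∈ 𝒦_j^{[q₁,q₂]}` by constants outside `[q₁, q₂]` and translate it by `t`,
getting `z_t`. For rationals `p₁ < p₂` with `[q₁, q₂] ∪ ([q₁, q₂] + t) ⊆ (p₁, p₂)` the curve `z_t`
lies in `𝒦_{j+1}^{[p₁,p₂]}`, and additivity of the integral gives
`∫_{q₁}^{q₂} d(ν·t)_y = ∫_{p₁}^{p₂} dν_{z_t(s)} - ν_{y(q₁)}[p₁, q₁ + t] - ν_{y(q₂)}[q₂ + t, p₂]`.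
The window integrals exist because along a continuous curve the l-bound makes Riemann sums over
fine partitions Cauchy. Those of `ν_n` and `ν₀` along `z_{t_n}` are close by `σ_Θ`-convergence, and
replacing `z_{t_n}` by `z_{t₀}` under `ν₀` costs at most `ω(θ(|t_n - t₀|)) · l([p₁, p₂])` by the
l-bound. Each edge term is split at a rational point close to `q_i + t₀`: on the fixed interval
`σ_Θ`-convergence along constant curves applies, and the remaining short interval is small by the
equicontinuity of the m-bounds.
-/

theorem TVLE.abs_le {μ : Set ℝ → ℝ} {m : Measure ℝ} (h : TVLE μ m) {A : Set ℝ}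
    (hA : Bornology.IsBounded A) (hAm : MeasurableSet A) : |μ A| ≤ (m A).toReal := by
  simpa using h A hA hAm 1 (fun _ => A)
    ⟨fun _ => hAm, fun i j hij => absurd (Subsingleton.elim i j) hij, iUnion_const A⟩

theorem TVLE.abs_lt_of_lt_ofReal {μ : Set ℝ → ℝ} {m : Measure ℝ} (h : TVLE μ m) {s t ε : ℝ}
    (hm : m (Icc s t) < ENNReal.ofReal ε) : |μ (Icc s t)| < ε :=
  (h.abs_le (Metric.isBounded_Icc s t) measurableSet_Icc).trans_lt
    (ENNReal.toReal_lt_of_lt_ofReal hm)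

theorem DiffLE.abs_sub_le {μ₁ μ₂ : Set ℝ → ℝ} {C : ℝ} {l : Measure ℝ} (h : DiffLE μ₁ μ₂ C l)
    {A : Set ℝ} (hA : Bornology.IsBounded A) (hAm : MeasurableSet A) :
    |μ₁ A - μ₂ A| ≤ C * (l A).toReal := by
  simpa using h A hA hAm 1 (fun _ => A)
    ⟨fun _ => hAm, fun i j hij => absurd (Subsingleton.elim i j) hij, iUnion_const A⟩

theorem DiffLE.mono {μ₁ μ₂ : Set ℝ → ℝ} {C C' : ℝ} {l : Measure ℝ} (h : DiffLE μ₁ μ₂ C l)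
    (hC : C ≤ C') : DiffLE μ₁ μ₂ C' l := fun A hA hAm n P hP =>
  (h A hA hAm n P hP).trans (mul_le_mul_of_nonneg_right hC ENNReal.toReal_nonneg)

namespace IsBMeasure

variable {μ : Set ℝ → ℝ}

theorem map_biUnion_finset (hμ : IsBMeasure μ) {s : Finset ℕ} {A : ℕ → Set ℝ}
    (hm : ∀ i ∈ s, MeasurableSet (A i)) (hb : ∀ i ∈ s, Bornology.IsBounded (A i))
    (hd : (s : Set ℕ).PairwiseDisjoint A) :
    μ (⋃ i ∈ s, A i) = ∑ i ∈ s, μ (A i) := by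
  classical
  set B : ℕ → Set ℝ := fun n => if n ∈ s then A n else ∅ with hB
  have hU : ⋃ n, B n = ⋃ i ∈ s, A i := by
    ext x
    simp [hB]
  have hsum := hμ.countably_additive B
    (fun n => by by_cases h : n ∈ s <;> simp [hB, h, hm n])
    (fun n => by by_cases h : n ∈ s <;> simp [hB, h, hb n])
    (fun m n hmn => by
      by_cases h : m ∈ s <;> by_cases h' : n ∈ s <;> simp [hB, h, h', Function.onFun]
      exact hd h h' hmn)
    (hU ▸ (Bornology.isBounded_biUnion_finset s).2 hb)
  rw [hU] at hsum
  refine hsum.unique ?_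
  convert hasSum_sum_of_ne_finset_zero (L := SummationFilter.unconditional ℕ)
    (fun n (hn : n ∉ s) => show μ (B n) = 0 by simp [hB, hn, hμ.empty]) using 1
  exact Finset.sum_congr rfl fun i hi => by simp [hB, hi]

theorem map_union (hμ : IsBMeasure μ) {A B : Set ℝ} (hA : MeasurableSet A)
    (hB : MeasurableSet B) (hAb : Bornology.IsBounded A) (hBb : Bornology.IsBounded B)
    (hd : Disjoint A B) : μ (A ∪ B) = μ A + μ B := by
  have := hμ.map_biUnion_finset (s := {0, 1}) (A := fun i => if i = 0 then A else B)
    (by simp [hA, hB]) (by simp [hAb, hBb])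
    (by simpa [Set.PairwiseDisjoint, Set.pairwise_insert, Function.onFun] using ⟨hd, hd.symm⟩)
  simpa using this

theorem map_Icc_eq_map_Ioc (hμ : IsBMeasure μ) {u v : ℝ} (h : u ≤ v) :
    μ (Icc u v) = μ (Ioc u v) := by
  rw [← Ioc_insert_left h, insert_eq, hμ.map_union (measurableSet_singleton u) measurableSet_Ioc
    Bornology.isBounded_singleton (Metric.isBounded_Ioc u v) (by simp), hμ.singleton, zero_add]

theorem map_Icc_eq_add (hμ : IsBMeasure μ) {a b c : ℝ} (hab : a ≤ b) (hbc : b ≤ c) :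
    μ (Icc a c) = μ (Icc a b) + μ (Icc b c) := by
  rw [← Icc_union_Ioc_eq_Icc hab hbc, hμ.map_union measurableSet_Icc measurableSet_Ioc
    (Metric.isBounded_Icc a b) (Metric.isBounded_Ioc b c)
    (disjoint_left.2 fun _ hx hx' => hx'.1.not_ge hx.2), hμ.map_Icc_eq_map_Ioc hbc]

end IsBMeasure

namespace TaggedPartition

section Cells

variable {a b : ℝ} (P : TaggedPartition a b)

/-- Half-open cells make a partition disjoint; b-measures do not see the endpoints. -/
def cell (i : ℕ) : Set ℝ := Ioc (P.t i) (P.t (i + 1))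

theorem measurableSet_cell (i : ℕ) : MeasurableSet (P.cell i) := measurableSet_Ioc

theorem strictMonoOn_t : StrictMonoOn P.t (Iic P.k) := strictMonoOn_Iic_of_lt_succ P.lt

theorem t_le_t {i j : ℕ} (hij : i ≤ j) (hj : j ≤ P.k) : P.t i ≤ P.t j :=
  P.strictMonoOn_t.monotoneOn (mem_Iic.2 (hij.trans hj)) (mem_Iic.2 hj) hij

theorem left_le_t {i : ℕ} (hi : i ≤ P.k) : a ≤ P.t i := by
  simpa only [P.left] using P.t_le_t (Nat.zero_le i) hi

theorem t_le_right {i : ℕ} (hi : i ≤ P.k) : P.t i ≤ b := by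
  simpa only [P.right] using P.t_le_t hi le_rfl

theorem left_lt_right (P : TaggedPartition a b) : a < b := by
  simpa only [P.left, P.right] using
    P.strictMonoOn_t (mem_Iic.2 (Nat.zero_le _)) (mem_Iic.2 le_rfl) P.k_pos

theorem tag_mem_Icc {i : ℕ} (hi : i < P.k) : P.tag i ∈ Icc a b :=
  ⟨(P.left_le_t hi.le).trans (P.tag_mem i hi).1, (P.tag_mem i hi).2.trans (P.t_le_right hi)⟩

theorem cell_subset {i : ℕ} (hi : i < P.k) : P.cell i ⊆ Ioc a b :=
  Ioc_subset_Ioc (P.left_le_t hi.le) (P.t_le_right hi)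

theorem abs_tag_sub_lt {δ : ℝ} (hP : P.MeshLT δ) {i : ℕ} (hi : i < P.k) {x : ℝ}
    (hx : x ∈ P.cell i) : |P.tag i - x| < δ := by
  have := hP i hi
  obtain ⟨h₁, h₂⟩ := P.tag_mem i hi
  exact abs_sub_lt_iff.2 ⟨by linarith [hx.1], by linarith [hx.2]⟩

theorem pairwiseDisjoint_cell : (↑(Finset.range P.k) : Set ℕ).PairwiseDisjoint P.cell := by
  intro i hi j hj hij
  wlog h : i < j generalizing i j
  · exact (this hj hi hij.symm (hij.lt_or_gt.resolve_left h)).symm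
  have hj' : j ≤ P.k := (Finset.mem_range.1 hj).le
  exact Set.disjoint_left.2 fun x hx hx' => (hx.2.trans (P.t_le_t h hj')).not_gt hx'.1

theorem biUnion_cell : ⋃ i ∈ Finset.range P.k, P.cell i = Ioc a b := by
  refine subset_antisymm (iUnion₂_subset fun i hi => P.cell_subset (Finset.mem_range.1 hi)) ?_
  calc Ioc a b = Ioc (P.t 0) (P.t P.k) := by rw [P.left, P.right]
    _ ⊆ _ := Ioc_subset_biUnion_Ioc P.k P.t

theorem inter_biUnion_cell (A : Set ℝ) :
    ⋃ i ∈ Finset.range P.k, A ∩ P.cell i = A ∩ Ioc a b := by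
  rw [← inter_iUnion₂, P.biUnion_cell]

theorem measure_inter_Ioc_eq_sum_cell (l : Measure ℝ) {A : Set ℝ} (hA : MeasurableSet A) :
    l (A ∩ Ioc a b) = ∑ i ∈ Finset.range P.k, l (A ∩ P.cell i) := by
  rw [← P.inter_biUnion_cell]
  exact measure_biUnion_finset (P.pairwiseDisjoint_cell.mono fun _ => inter_subset_right)
    fun i _ => hA.inter measurableSet_Ioc

end Cells

variable {a b c : ℝ} {V : Type*}

theorem exists_meshLT (hab : a < b) {δ : ℝ} (hδ : 0 < δ) :
    ∃ P : TaggedPartition a b, P.MeshLT δ := by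
  obtain ⟨n, hn⟩ := exists_nat_gt ((b - a) / δ)
  have hn0 : (0 : ℝ) < n := (div_pos (sub_pos.2 hab) hδ).trans hn
  have hh : 0 < (b - a) / n := div_pos (sub_pos.2 hab) hn0
  refine ⟨⟨n, by exact_mod_cast hn0, fun i => a + i * ((b - a) / n),
    fun i => a + i * ((b - a) / n), by simp, by field_simp; ring, fun i _ => ?_,
    fun i _ => ⟨le_rfl, ?_⟩⟩, fun i _ => ?_⟩
  · push_cast; linarith
  · push_cast; linarith
  · have : (b - a) / n < δ := by
      rw [div_lt_iff₀ hδ] at hn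
      rw [div_lt_iff₀ hn0]
      linarith
    show a + ((i + 1 : ℕ) : ℝ) * _ - (a + i * _) < δ
    push_cast
    linarith

theorem MeshLT.mono {P : TaggedPartition a b} {δ δ' : ℝ} (hP : P.MeshLT δ) (h : δ ≤ δ') :
    P.MeshLT δ' := fun i hi => (hP i hi).trans_le h

def trans (P : TaggedPartition a c) (Q : TaggedPartition c b) : TaggedPartition a b where
  k := P.k + Q.k
  k_pos := Nat.add_pos_left P.k_pos _
  t i := if i < P.k then P.t i else Q.t (i - P.k)
  tag i := if i < P.k then P.tag i else Q.tag (i - P.k)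
  left := by simp [P.k_pos, P.left]
  right := by simp [Q.right]
  lt i hi := by
    rcases lt_or_ge i P.k with h | h
    · rcases (show i + 1 ≤ P.k by omega).lt_or_eq with h' | h'
      · simpa [h, h'] using P.lt i h
      · have hc : P.t (i + 1) = Q.t 0 := by rw [h', P.right, Q.left]
        simpa [h, ← h', ← hc] using P.lt i h
    · obtain ⟨j, rfl⟩ := Nat.exists_eq_add_of_le h
      simpa [add_assoc] using Q.lt j (by omega)
  tag_mem i hi := by
    rcases lt_or_ge i P.k with h | h
    · rcases (show i + 1 ≤ P.k by omega).lt_or_eq with h' | h'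
      · simpa [h, h'] using P.tag_mem i h
      · have hc : P.t (i + 1) = Q.t 0 := by rw [h', P.right, Q.left]
        simpa [h, ← h', ← hc] using P.tag_mem i h
    · obtain ⟨j, rfl⟩ := Nat.exists_eq_add_of_le h
      simpa [add_assoc] using Q.tag_mem j (by omega)

theorem trans_t_of_le (P : TaggedPartition a c) (Q : TaggedPartition c b) {i : ℕ}
    (hi : i ≤ P.k) : (P.trans Q).t i = P.t i := by
  rcases hi.lt_or_eq with h | rfl
  · simp [trans, h]
  · simp [trans, P.right, Q.left]

theorem trans_t_add (P : TaggedPartition a c) (Q : TaggedPartition c b) (i : ℕ) :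
    (P.trans Q).t (P.k + i) = Q.t i := by
  simp [trans]

theorem trans_tag_of_lt (P : TaggedPartition a c) (Q : TaggedPartition c b) {i : ℕ}
    (hi : i < P.k) : (P.trans Q).tag i = P.tag i := by
  simp [trans, hi]

theorem trans_tag_add (P : TaggedPartition a c) (Q : TaggedPartition c b) (i : ℕ) :
    (P.trans Q).tag (P.k + i) = Q.tag i := by
  simp [trans]

theorem MeshLT.trans {P : TaggedPartition a c} {Q : TaggedPartition c b} {δ : ℝ}
    (hP : P.MeshLT δ) (hQ : Q.MeshLT δ) : (P.trans Q).MeshLT δ := by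
  intro i hi
  rcases lt_or_ge i P.k with h | h
  · rw [trans_t_of_le P Q h, trans_t_of_le P Q h.le]
    exact hP i h
  · obtain ⟨j, rfl⟩ := Nat.exists_eq_add_of_le h
    rw [add_assoc, trans_t_add, trans_t_add]
    exact hQ j (by change P.k + j < P.k + Q.k at hi; omega)

theorem riemannSum_trans (ν : V → Set ℝ → ℝ) (y : ℝ → V) (P : TaggedPartition a c)
    (Q : TaggedPartition c b) :
    RiemannSum ν y (P.trans Q) = RiemannSum ν y P + RiemannSum ν y Q := by
  simp only [RiemannSum]
  rw [show (P.trans Q).k = P.k + Q.k from rfl, Finset.sum_range_add]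
  congr 1
  · refine Finset.sum_congr rfl fun i hi => ?_
    have hi := Finset.mem_range.1 hi
    rw [trans_tag_of_lt P Q hi, trans_t_of_le P Q hi.le, trans_t_of_le P Q hi]
  · refine Finset.sum_congr rfl fun i _ => ?_
    rw [trans_tag_add, trans_t_add, add_assoc, trans_t_add]

def translate (P : TaggedPartition a b) (c : ℝ) {a' b' : ℝ} (ha : a' + c = a)
    (hb : b' + c = b) : TaggedPartition a' b' where
  k := P.k
  k_pos := P.k_pos
  t i := P.t i - c
  tag i := P.tag i - c
  left := by rw [P.left, ← ha, add_sub_cancel_right]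
  right := by rw [P.right, ← hb, add_sub_cancel_right]
  lt i hi := sub_lt_sub_right (P.lt i hi) c
  tag_mem i hi := ⟨sub_le_sub_right (P.tag_mem i hi).1 c, sub_le_sub_right (P.tag_mem i hi).2 c⟩

theorem MeshLT.translate {P : TaggedPartition a b} {δ : ℝ} (hP : P.MeshLT δ) (c : ℝ)
    {a' b' : ℝ} (ha : a' + c = a) (hb : b' + c = b) : (P.translate c ha hb).MeshLT δ :=
  fun i hi => by simpa [TaggedPartition.translate] using hP i hi

theorem riemannSum_translate (ν : V → Set ℝ → ℝ) (y : ℝ → V) (P : TaggedPartition a b) (c : ℝ)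
    {a' b' : ℝ} (ha : a' + c = a) (hb : b' + c = b) :
    RiemannSum (BTranslate ν c) y (P.translate c ha hb)
      = RiemannSum ν (fun s => y (s - c)) P := by
  simp [RiemannSum, BTranslate, translate]

end TaggedPartition

namespace IsBMeasure

variable {μ : Set ℝ → ℝ} {a b : ℝ}

theorem map_Ioc_eq_sum_cell (hμ : IsBMeasure μ) (P : TaggedPartition a b) :
    μ (Ioc a b) = ∑ i ∈ Finset.range P.k, μ (P.cell i) := by
  rw [← P.biUnion_cell]
  exact hμ.map_biUnion_finset (fun i _ => measurableSet_Ioc)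
    (fun i _ => Metric.isBounded_Ioc _ _) P.pairwiseDisjoint_cell

theorem map_inter_Ioc_eq_sum_cell (hμ : IsBMeasure μ) (P : TaggedPartition a b) {A : Set ℝ}
    (hA : MeasurableSet A) (hAb : Bornology.IsBounded A) :
    μ (A ∩ Ioc a b) = ∑ i ∈ Finset.range P.k, μ (A ∩ P.cell i) := by
  rw [← P.inter_biUnion_cell]
  exact hμ.map_biUnion_finset (fun i _ => hA.inter measurableSet_Ioc)
    (fun i _ => hAb.subset inter_subset_left)
    (P.pairwiseDisjoint_cell.mono fun _ => inter_subset_right)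

end IsBMeasure

section RiemannSum

variable {V : Type*} {ν ν' : V → Set ℝ → ℝ} {a b : ℝ}

theorem riemannSum_eq_sum_cell (hν : ∀ v, IsBMeasure (ν v)) (y : ℝ → V)
    (P : TaggedPartition a b) :
    RiemannSum ν y P = ∑ i ∈ Finset.range P.k, ν (y (P.tag i)) (P.cell i) :=
  Finset.sum_congr rfl fun i hi =>
    (hν _).map_Icc_eq_map_Ioc (P.lt i (Finset.mem_range.1 hi)).le

theorem riemannSum_eq_sum_sum_inter (hν : ∀ v, IsBMeasure (ν v)) (y : ℝ → V)
    (P Q : TaggedPartition a b) :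
    RiemannSum ν y P = ∑ i ∈ Finset.range P.k, ∑ k ∈ Finset.range Q.k,
      ν (y (P.tag i)) (P.cell i ∩ Q.cell k) := by
  rw [riemannSum_eq_sum_cell hν]
  refine Finset.sum_congr rfl fun i hi => ?_
  conv_lhs => rw [← inter_eq_left.2 (P.cell_subset (Finset.mem_range.1 hi))]
  exact (hν _).map_inter_Ioc_eq_sum_cell Q measurableSet_Ioc (Metric.isBounded_Ioc _ _)

theorem riemannSum_of_eqOn_const (hν : ∀ v, IsBMeasure (ν v)) {y : ℝ → V} {v : V}
    (hy : EqOn y (fun _ => v) (Icc a b)) (P : TaggedPartition a b) :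
    RiemannSum ν y P = ν v (Icc a b) := by
  rw [riemannSum_eq_sum_cell hν, (hν v).map_Icc_eq_map_Ioc P.left_lt_right.le,
    (hν v).map_Ioc_eq_sum_cell P]
  exact Finset.sum_congr rfl fun i hi => by rw [hy (P.tag_mem_Icc (Finset.mem_range.1 hi))]

theorem sum_sum_toReal_measure_inter_cell (P Q : TaggedPartition a b) {l : Measure ℝ}
    (hl : l (Icc a b) ≠ ⊤) :
    ∑ i ∈ Finset.range P.k, ∑ k ∈ Finset.range Q.k, (l (P.cell i ∩ Q.cell k)).toReal
      = (l (Ioc a b)).toReal := by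
  have hfin : ∀ A ⊆ Ioc a b, l A ≠ ⊤ := fun A hA =>
    ne_top_of_le_ne_top hl (measure_mono (hA.trans Ioc_subset_Icc_self))
  rw [← inter_self (Ioc a b), P.measure_inter_Ioc_eq_sum_cell l measurableSet_Ioc,
    ENNReal.toReal_sum fun i _ => hfin _ inter_subset_left]
  refine Finset.sum_congr rfl fun i hi => ?_
  have hPi := P.cell_subset (Finset.mem_range.1 hi)
  rw [inter_comm (Ioc a b), Q.measure_inter_Ioc_eq_sum_cell l (P.measurableSet_cell i),
    ENNReal.toReal_sum fun k _ => hfin _ (inter_subset_left.trans hPi)]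

/-- Both Riemann sums are refined along the common cells `P.cell i ∩ Q.cell k`. -/
theorem abs_riemannSum_sub_riemannSum_le (hν : ∀ v, IsBMeasure (ν v))
    (hν' : ∀ v, IsBMeasure (ν' v)) {y y' : ℝ → V} (P Q : TaggedPartition a b)
    {l : Measure ℝ} (hl : l (Icc a b) ≠ ⊤) {C : ℝ} (hC : 0 ≤ C)
    (h : ∀ i < P.k, ∀ k < Q.k, (P.cell i ∩ Q.cell k).Nonempty →
      |ν (y (P.tag i)) (P.cell i ∩ Q.cell k) - ν' (y' (Q.tag k)) (P.cell i ∩ Q.cell k)|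
        ≤ C * (l (P.cell i ∩ Q.cell k)).toReal) :
    |RiemannSum ν y P - RiemannSum ν' y' Q| ≤ C * (l (Icc a b)).toReal := by
  rw [riemannSum_eq_sum_sum_inter hν y P Q, riemannSum_eq_sum_sum_inter hν' y' Q P,
    Finset.sum_comm (s := Finset.range Q.k)]
  simp only [inter_comm (Q.cell _), ← Finset.sum_sub_distrib]
  calc _ ≤ ∑ i ∈ Finset.range P.k, ∑ k ∈ Finset.range Q.k,
        |ν (y (P.tag i)) (P.cell i ∩ Q.cell k) - ν' (y' (Q.tag k)) (P.cell i ∩ Q.cell k)| :=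
        (Finset.abs_sum_le_sum_abs _ _).trans
          (Finset.sum_le_sum fun i _ => Finset.abs_sum_le_sum_abs _ _)
    _ ≤ ∑ i ∈ Finset.range P.k, ∑ k ∈ Finset.range Q.k,
        C * (l (P.cell i ∩ Q.cell k)).toReal := by
        refine Finset.sum_le_sum fun i hi => Finset.sum_le_sum fun k hk => ?_
        rcases (P.cell i ∩ Q.cell k).eq_empty_or_nonempty with he | hne
        · simp [he, (hν _).empty, (hν' _).empty]
        · exact h i (Finset.mem_range.1 hi) k (Finset.mem_range.1 hk) hne
    _ = C * (l (Ioc a b)).toReal := by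
        simp only [← Finset.mul_sum, sum_sum_toReal_measure_inter_cell P Q hl]
    _ ≤ C * (l (Icc a b)).toReal :=
        mul_le_mul_of_nonneg_left (ENNReal.toReal_mono hl (measure_mono Ioc_subset_Icc_self)) hC

end RiemannSum

section CurveIntegral

variable {V : Type*} {ν ν' : V → Set ℝ → ℝ} {y y' : ℝ → V} {a b c : ℝ}

/-- `S` is approximated by Riemann sums over arbitrarily fine partitions. Unlike being the
integral, this is stable under concatenation of intervals. -/
def IsRiemannSumClusterPt (ν : V → Set ℝ → ℝ) (y : ℝ → V) (a b S : ℝ) : Prop :=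
  ∀ ε > 0, ∀ δ > 0, ∃ P : TaggedPartition a b, P.MeshLT δ ∧ |S - RiemannSum ν y P| < ε

theorem IsCurveIntegral.isRiemannSumClusterPt {L : ℝ} (hab : a < b)
    (h : IsCurveIntegral ν y a b L) : IsRiemannSumClusterPt ν y a b L := fun ε hε δ hδ => by
  obtain ⟨δ', hδ', h⟩ := h ε hε
  obtain ⟨P, hP⟩ := TaggedPartition.exists_meshLT hab (lt_min hδ hδ')
  exact ⟨P, hP.mono (min_le_left _ _), h P (hP.mono (min_le_right _ _))⟩

theorem IsRiemannSumClusterPt.add {S₁ S₂ : ℝ} (h₁ : IsRiemannSumClusterPt ν y a c S₁)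
    (h₂ : IsRiemannSumClusterPt ν y c b S₂) : IsRiemannSumClusterPt ν y a b (S₁ + S₂) :=
  fun ε hε δ hδ => by
  obtain ⟨P, hP, e₁⟩ := h₁ (ε / 2) (half_pos hε) δ hδ
  obtain ⟨Q, hQ, e₂⟩ := h₂ (ε / 2) (half_pos hε) δ hδ
  refine ⟨P.trans Q, hP.trans hQ, ?_⟩
  rw [TaggedPartition.riemannSum_trans, add_sub_add_comm]
  linarith [abs_add_le (S₁ - RiemannSum ν y P) (S₂ - RiemannSum ν y Q)]

theorem IsCurveIntegral.eq_of_isRiemannSumClusterPt {L S : ℝ} (h : IsCurveIntegral ν y a b L)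
    (hS : IsRiemannSumClusterPt ν y a b S) : L = S := by
  refine eq_of_forall_dist_le fun ε hε => ?_
  obtain ⟨δ, hδ, h⟩ := h (ε / 2) (half_pos hε)
  obtain ⟨P, hP, e⟩ := hS (ε / 2) (half_pos hε) δ hδ
  rw [Real.dist_eq]
  linarith [abs_sub_le L (RiemannSum ν y P) S, h P hP, abs_sub_comm S (RiemannSum ν y P)]

theorem IsCurveIntegral.eq_add_add {c₁ c₂ L L₁ L₂ L₃ : ℝ} (h₁ : a < c₁) (h₂ : c₁ < c₂)
    (h₃ : c₂ < b) (hL : IsCurveIntegral ν y a b L) (hL₁ : IsCurveIntegral ν y a c₁ L₁)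
    (hL₂ : IsCurveIntegral ν y c₁ c₂ L₂) (hL₃ : IsCurveIntegral ν y c₂ b L₃) :
    L = L₁ + L₂ + L₃ :=
  hL.eq_of_isRiemannSumClusterPt <| ((hL₁.isRiemannSumClusterPt h₁).add
    (hL₂.isRiemannSumClusterPt h₂)).add (hL₃.isRiemannSumClusterPt h₃)

theorem IsCurveIntegral.abs_sub_le_of_forall_riemannSum {L₁ L₂ B : ℝ} (hab : a < b)
    (h₁ : IsCurveIntegral ν y a b L₁) (h₂ : IsCurveIntegral ν' y' a b L₂)
    (hB : ∀ P : TaggedPartition a b, |RiemannSum ν y P - RiemannSum ν' y' P| ≤ B) :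
    |L₁ - L₂| ≤ B := by
  refine le_of_forall_pos_lt_add fun ε hε => ?_
  obtain ⟨δ₁, hδ₁, h₁⟩ := h₁ (ε / 2) (half_pos hε)
  obtain ⟨δ₂, hδ₂, h₂⟩ := h₂ (ε / 2) (half_pos hε)
  obtain ⟨P, hP⟩ := TaggedPartition.exists_meshLT hab (lt_min hδ₁ hδ₂)
  have e₁ := h₁ P (hP.mono (min_le_left _ _))
  have e₂ := h₂ P (hP.mono (min_le_right _ _))
  rw [abs_sub_comm] at e₂
  linarith [abs_sub_le L₁ (RiemannSum ν y P) L₂,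
    abs_sub_le (RiemannSum ν y P) (RiemannSum ν' y' P) L₂, hB P]

theorem IsCurveIntegral.abs_sub_le_of_forall_diffLE (hν : ∀ v, IsBMeasure (ν v)) {L₁ L₂ : ℝ}
    (hab : a < b) (h₁ : IsCurveIntegral ν y a b L₁) (h₂ : IsCurveIntegral ν y' a b L₂)
    {l : Measure ℝ} (hl : l (Icc a b) ≠ ⊤) {C : ℝ} (hC : 0 ≤ C)
    (hd : ∀ s ∈ Icc a b, DiffLE (ν (y s)) (ν (y' s)) C l) :
    |L₁ - L₂| ≤ C * (l (Icc a b)).toReal := by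
  refine h₁.abs_sub_le_of_forall_riemannSum hab h₂ fun P =>
    abs_riemannSum_sub_riemannSum_le hν hν P P hl hC fun i hi k hk hne => ?_
  obtain rfl : i = k := P.pairwiseDisjoint_cell.elim (by simpa using hi) (by simpa using hk)
    (not_disjoint_iff_nonempty_inter.2 hne)
  exact (hd _ (P.tag_mem_Icc hi)).abs_sub_le
    ((Metric.isBounded_Ioc _ _).subset inter_subset_left)
    ((P.measurableSet_cell i).inter (P.measurableSet_cell i))

theorem IsCurveIntegral.congr {L : ℝ} (h : IsCurveIntegral ν y a b L)
    (hyy' : EqOn y y' (Icc a b)) : IsCurveIntegral ν y' a b L := fun ε hε => by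
  obtain ⟨δ, hδ, h⟩ := h ε hε
  refine ⟨δ, hδ, fun P hP => ?_⟩
  have : RiemannSum ν y P = RiemannSum ν y' P := Finset.sum_congr rfl fun i hi => by
    rw [hyy' (P.tag_mem_Icc (Finset.mem_range.1 hi))]
  exact this ▸ h P hP

theorem IsCurveIntegral.of_bTranslate {L : ℝ} (h : IsCurveIntegral (BTranslate ν c) y a b L) :
    IsCurveIntegral ν (fun s => y (s - c)) (a + c) (b + c) L := fun ε hε => by
  obtain ⟨δ, hδ, h⟩ := h ε hε
  refine ⟨δ, hδ, fun P hP => ?_⟩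
  rw [← TaggedPartition.riemannSum_translate ν y P c rfl rfl]
  exact h _ (hP.translate c rfl rfl)

theorem isCurveIntegral_of_eqOn_const (hν : ∀ v, IsBMeasure (ν v)) {v : V}
    (hy : EqOn y (fun _ => v) (Icc a b)) : IsCurveIntegral ν y a b (ν v (Icc a b)) :=
  fun ε hε => ⟨1, one_pos, fun P _ => by simpa [riemannSum_of_eqOn_const hν hy P] using hε⟩

theorem exists_isCurveIntegral_of_cauchy (hab : a < b)
    (h : ∀ ε > 0, ∃ δ > 0, ∀ P Q : TaggedPartition a b, P.MeshLT δ → Q.MeshLT δ →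
      |RiemannSum ν y P - RiemannSum ν y Q| ≤ ε) :
    ∃ L, IsCurveIntegral ν y a b L := by
  choose P hP using fun n : ℕ =>
    TaggedPartition.exists_meshLT hab (Nat.one_div_pos_of_nat (n := n))
  have hfine : ∀ δ > 0, ∀ᶠ n in atTop, (P n).MeshLT δ := fun δ hδ => by
    obtain ⟨N, hN⟩ := exists_nat_one_div_lt hδ
    exact eventually_atTop.2
      ⟨N, fun n hn => (hP n).mono ((Nat.one_div_le_one_div hn).trans hN.le)⟩
  have hcauchy : CauchySeq fun n => RiemannSum ν y (P n) :=
    Metric.cauchySeq_iff.2 fun ε hε => by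
      obtain ⟨δ, hδ, hPQ⟩ := h (ε / 2) (half_pos hε)
      obtain ⟨N, hN⟩ := eventually_atTop.1 (hfine δ hδ)
      exact ⟨N, fun m hm n hn => (hPQ _ _ (hN m hm) (hN n hn)).trans_lt (half_lt_self hε)⟩
  obtain ⟨L, hL⟩ := cauchySeq_tendsto_of_complete hcauchy
  refine ⟨L, fun ε hε => ?_⟩
  obtain ⟨δ, hδ, hPQ⟩ := h (ε / 2) (half_pos hε)
  obtain ⟨n, hn, hnδ⟩ :=
    ((hL.eventually (Metric.ball_mem_nhds L (half_pos hε))).and (hfine δ hδ)).exists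
  refine ⟨δ, hδ, fun Q hQ => ?_⟩
  rw [Real.dist_eq, abs_sub_comm] at hn
  linarith [abs_sub_le L (RiemannSum ν y (P n)) (RiemannSum ν y Q), hPQ _ _ hnδ hQ]

theorem exists_isCurveIntegral (hν : ∀ v, IsBMeasure (ν v)) (hab : a < b) {l : Measure ℝ}
    (hl : l (Icc a b) ≠ ⊤)
    (hmod : ∀ ε > 0, ∃ δ > 0, ∀ s ∈ Icc a b, ∀ s' ∈ Icc a b, |s - s'| < δ →
      ∀ A : Set ℝ, Bornology.IsBounded A → MeasurableSet A →
        |ν (y s) A - ν (y s') A| ≤ ε * (l A).toReal) :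
    ∃ L, IsCurveIntegral ν y a b L := by
  refine exists_isCurveIntegral_of_cauchy hab fun ε hε => ?_
  set C := (l (Icc a b)).toReal + 1
  have hC : 0 < C := by positivity
  obtain ⟨δ, hδ, hmod⟩ := hmod (ε / C) (div_pos hε hC)
  refine ⟨δ / 2, half_pos hδ, fun P Q hP hQ => ?_⟩
  refine (abs_riemannSum_sub_riemannSum_le hν hν P Q hl (div_pos hε hC).le
    fun i hi k hk ⟨x, hxP, hxQ⟩ => hmod _ (P.tag_mem_Icc hi) _ (Q.tag_mem_Icc hk) ?_ _
      ((Metric.isBounded_Ioc _ _).subset inter_subset_left)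
      ((P.measurableSet_cell i).inter (Q.measurableSet_cell k))).trans ?_
  · have := abs_sub_le (P.tag i) x (Q.tag k)
    rw [abs_sub_comm x] at this
    linarith [P.abs_tag_sub_lt hP hi hxP, Q.abs_tag_sub_lt hQ hk hxQ]
  · rw [div_mul_eq_mul_div, div_le_iff₀ hC]
    exact mul_le_mul_of_nonneg_left (by linarith) hε.le

end CurveIntegral

theorem IsParamBMeasure.exists_isCurveIntegral {ω : ℕ → ℝ → ℝ} (hω : IsModulusFamily ω)
    {ν : E → Set ℝ → ℝ} (hν : IsParamBMeasure ω ν) {y : ℝ → E} {a b : ℝ} (hab : a < b)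
    (hy : ContinuousOn y (Icc a b)) : ∃ L, IsCurveIntegral ν y a b L := by
  obtain ⟨R, hR⟩ := isCompact_Icc.exists_bound_of_continuousOn hy
  obtain ⟨j, hj⟩ := exists_nat_ge (max R 1)
  obtain ⟨-, l, -, hl⟩ := hν.2 j (by exact_mod_cast (le_max_right R 1).trans hj)
  have hyj : ∀ s ∈ Icc a b, ‖y s‖ ≤ j := fun s hs => (hR s hs).trans ((le_max_left R 1).trans hj)
  have := hl.1.1
  refine _root_.exists_isCurveIntegral hν.1 hab (isCompact_Icc.measure_lt_top (μ := l)).ne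
    fun ε hε => ?_
  obtain ⟨η, hη, hωη⟩ := Metric.continuousWithinAt_iff.1 (hω.continuousOn j 0 self_mem_Ici) ε hε
  obtain ⟨δ, hδ, hyδ⟩ := Metric.uniformContinuousOn_iff.1
    (isCompact_Icc.uniformContinuousOn_of_continuous hy) η hη
  refine ⟨δ, hδ, fun s hs s' hs' hss' A hA hAm => ?_⟩
  refine ((hl.2 _ _ (hyj s hs) (hyj s' hs')).abs_sub_le hA hAm).trans
    (mul_le_mul_of_nonneg_right ?_ ENNReal.toReal_nonneg)
  have hyss' : dist (y s) (y s') < η := hyδ s hs s' hs' (by rwa [Real.dist_eq])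
  have := hωη (mem_Ici.2 (norm_nonneg (y s - y s'))) (by simpa [← dist_eq_norm] using hyss')
  rw [Real.dist_eq, hω.map_zero, sub_zero] at this
  exact (le_abs_self _).trans this.le

section Extension

variable {V : Type*} {q₁ q₂ : ℝ}

noncomputable def extendShift (y : ℝ → V) (hq : q₁ ≤ q₂) (t : ℝ) : ℝ → V :=
  fun s => y (projIcc q₁ q₂ hq (s - t))

theorem extendShift_of_le (y : ℝ → V) (hq : q₁ ≤ q₂) {t s : ℝ} (hs : s ≤ q₁ + t) :
    extendShift y hq t s = y q₁ := by
  simp [extendShift, projIcc_of_le_left hq (sub_le_iff_le_add.2 hs)]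

theorem extendShift_of_ge (y : ℝ → V) (hq : q₁ ≤ q₂) {t s : ℝ} (hs : q₂ + t ≤ s) :
    extendShift y hq t s = y q₂ := by
  simp [extendShift, projIcc_of_right_le hq (le_sub_iff_add_le.2 hs)]

theorem extendShift_eqOn (y : ℝ → V) (hq : q₁ ≤ q₂) (t : ℝ) :
    EqOn (extendShift y hq t) (fun s => y (s - t)) (Icc (q₁ + t) (q₂ + t)) := fun s hs => by
  simp [extendShift, projIcc_of_mem hq ⟨le_sub_iff_add_le.2 hs.1, sub_le_iff_le_add.2 hs.2⟩]

theorem IsCurveIntegral.eq_add_add_of_bTranslate {ν : V → Set ℝ → ℝ}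
    (hν : ∀ v, IsBMeasure (ν v)) {y : ℝ → V} {p₁ p₂ t L Lf : ℝ} (hq : q₁ < q₂)
    (h₁ : p₁ < q₁ + t) (h₂ : q₂ + t < p₂) (hL : IsCurveIntegral (BTranslate ν t) y q₁ q₂ L)
    (hLf : IsCurveIntegral ν (extendShift y hq.le t) p₁ p₂ Lf) :
    Lf = ν (y q₁) (Icc p₁ (q₁ + t)) + L + ν (y q₂) (Icc (q₂ + t) p₂) :=
  hLf.eq_add_add h₁ (by linarith) h₂
    (isCurveIntegral_of_eqOn_const hν fun _ hs => extendShift_of_le y hq.le hs.2)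
    (hL.of_bTranslate.congr (extendShift_eqOn y hq.le t).symm)
    (isCurveIntegral_of_eqOn_const hν fun _ hs => extendShift_of_ge y hq.le hs.1)

end Extension

section KSet

variable {Θ : ℕ → ℚ → ℚ → ℝ → ℝ} {j : ℕ} {q₁ q₂ : ℚ}

theorem norm_extendShift_le {y : ℝ → E} (hy : y ∈ KSet E Θ j q₁ q₂) (hq : (q₁ : ℝ) ≤ q₂)
    (t s : ℝ) : ‖extendShift y hq t s‖ ≤ j :=
  hy.2.1 _ (projIcc (q₁ : ℝ) q₂ hq _).2

theorem norm_extendShift_sub_le (hΘ : IsSuitableModuli Θ) (hq : q₁ < q₂) {y : ℝ → E}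
    (hy : y ∈ KSet E Θ j q₁ q₂) (hq' : (q₁ : ℝ) ≤ q₂) (t t' s s' : ℝ) :
    ‖extendShift y hq' t s - extendShift y hq' t' s'‖ ≤ Θ j q₁ q₂ |s - t - (s' - t')| :=
  (hy.2.2 _ (projIcc (q₁ : ℝ) q₂ hq' _).2 _ (projIcc (q₁ : ℝ) q₂ hq' _).2).trans <|
    hΘ.monotoneOn j q₁ q₂ hq (mem_Ici.2 (abs_nonneg _)) (mem_Ici.2 (abs_nonneg _)) <| by
      simpa [← Real.dist_eq, Subtype.dist_eq] using
        (LipschitzWith.projIcc hq').dist_le_mul (s - t) (s' - t')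

theorem extendShift_mem_KSet (hΘ : IsSuitableModuli Θ) (hq : q₁ < q₂) {y : ℝ → E}
    (hy : y ∈ KSet E Θ j q₁ q₂) (hq' : (q₁ : ℝ) ≤ q₂) (t : ℝ) {j' : ℕ} (hj : j ≤ j')
    {p₁ p₂ : ℚ} (hp₁ : p₁ ≤ q₁) (hp₂ : q₂ ≤ p₂) : extendShift y hq' t ∈ KSet E Θ j' p₁ p₂ := by
  refine ⟨?_, fun s _ => (norm_extendShift_le hy hq' t s).trans (Nat.cast_le.2 hj),
    fun s _ s' _ => ?_⟩
  · refine (hy.1.comp_continuous ?_ fun s => (projIcc (q₁ : ℝ) q₂ hq' (s - t)).2).continuousOn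
    exact continuous_subtype_val.comp (continuous_projIcc.comp (continuous_sub_right t))
  · refine (norm_extendShift_sub_le hΘ hq hy hq' t t s s').trans ?_
    rw [sub_sub_sub_cancel_right]
    exact hΘ.mono j j' p₁ p₂ q₁ q₂ hj hp₁ hq hp₂ _ (abs_nonneg _)

theorem const_mem_KSet (hΘ : IsSuitableModuli Θ) (hq : q₁ < q₂) {v : E} (hv : ‖v‖ ≤ j) :
    (fun _ => v) ∈ KSet E Θ j q₁ q₂ :=
  ⟨continuousOn_const, fun _ _ => hv, fun _ _ _ _ => by
    simpa using hΘ.nonneg j q₁ q₂ _ hq (abs_nonneg _)⟩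

end KSet

theorem tendsto_comp_abs_of_continuousWithinAt {ω θ : ℝ → ℝ}
    (hω : ContinuousWithinAt ω (Ici 0) 0) (hω0 : ω 0 = 0) (hθ : ContinuousWithinAt θ (Ici 0) 0)
    (hθ0 : θ 0 = 0) (hθnn : MapsTo θ (Ici 0) (Ici 0)) :
    Tendsto (fun x => ω (θ |x|)) (𝓝 0) (𝓝 0) := by
  have habs : Tendsto (fun x : ℝ => |x|) (𝓝 0) (𝓝[Ici 0] 0) :=
    tendsto_nhdsWithin_iff.2 ⟨by simpa using (continuous_abs.tendsto (0 : ℝ)),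
      Eventually.of_forall fun x => abs_nonneg x⟩
  have hωθ := (show ContinuousWithinAt ω (Ici 0) (θ 0) by rwa [hθ0]).comp hθ hθnn
  simpa [Function.comp_def, hθ0, hω0] using hωθ.tendsto.comp habs

theorem IsParamBMeasure.eventually_abs_sub_lt_of_extendShift {ω : ℕ → ℝ → ℝ}
    (hω : IsModulusFamily ω) {Θ : ℕ → ℚ → ℚ → ℝ → ℝ} (hΘ : IsSuitableModuli Θ)
    {ν : E → Set ℝ → ℝ} (hν : IsParamBMeasure ω ν) {j : ℕ} {q₁ q₂ : ℚ} (hq : q₁ < q₂)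
    (hq' : (q₁ : ℝ) ≤ q₂) {p₁ p₂ : ℝ} (hp : p₁ < p₂) {ts : ℕ → ℝ} {t₀ : ℝ}
    (ht : Tendsto ts atTop (𝓝 t₀)) {ε : ℝ} (hε : 0 < ε) :
    ∀ᶠ n in atTop, ∀ y ∈ KSet E Θ j q₁ q₂, ∀ L₁ L₂ : ℝ,
      IsCurveIntegral ν (extendShift y hq' (ts n)) p₁ p₂ L₁ →
      IsCurveIntegral ν (extendShift y hq' t₀) p₁ p₂ L₂ → |L₁ - L₂| < ε := by
  obtain ⟨-, l, -, hl⟩ := hν.2 (j + 1) le_add_self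
  have := hl.1.1
  have hωΘ := tendsto_comp_abs_of_continuousWithinAt (hω.continuousOn (j + 1) 0 self_mem_Ici)
    (hω.map_zero _) (hΘ.continuousOn j q₁ q₂ hq 0 self_mem_Ici) (hΘ.map_zero j q₁ q₂ hq)
    fun x hx => hΘ.nonneg j q₁ q₂ x hq hx
  filter_upwards [((hωΘ.comp (tendsto_sub_nhds_zero_iff.2 ht)).mul_const
    (l (Icc p₁ p₂)).toReal).eventually_lt_const (u := ε) (by simpa using hε)]
    with n hn y hy L₁ L₂ h₁ h₂
  have hj : (j : ℝ) ≤ (j + 1 : ℕ) := by simp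
  have hdist : ∀ s, ‖extendShift y hq' (ts n) s - extendShift y hq' t₀ s‖
      ≤ Θ j q₁ q₂ |ts n - t₀| := fun s => by
    simpa [sub_sub_sub_cancel_left, abs_sub_comm] using
      norm_extendShift_sub_le hΘ hq hy hq' (ts n) t₀ s s
  refine (h₁.abs_sub_le_of_forall_diffLE hν.1 hp h₂ (isCompact_Icc.measure_lt_top (μ := l)).ne
    (hω.nonneg _ _ (hΘ.nonneg j q₁ q₂ _ hq (abs_nonneg _))) fun s _ => ?_).trans_lt hn
  exact (hl.2 _ _ ((norm_extendShift_le hy hq' _ s).trans hj)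
    ((norm_extendShift_le hy hq' _ s).trans hj)).mono
    (hω.monotoneOn _ (norm_nonneg _) (hΘ.nonneg j q₁ q₂ _ hq (abs_nonneg _)) (hdist s))

section Edges

variable {Θ : ℕ → ℚ → ℚ → ℝ → ℝ} {ν : ℕ → E → Set ℝ → ℝ} {ν₀ : E → Set ℝ → ℝ} {j : ℕ}

def UniformlySmallOnShortIntervals (ν : ℕ → E → Set ℝ → ℝ) (ν₀ : E → Set ℝ → ℝ) (j : ℕ) :
    Prop :=
  ∀ ε > 0, ∃ δ > 0, ∀ s t : ℝ, 0 ≤ t - s → t - s < δ → ∀ v : E, ‖v‖ ≤ j →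
    (∀ n, |ν n v (Icc s t)| < ε) ∧ |ν₀ v (Icc s t)| < ε

theorem uniformlySmallOnShortIntervals_of_tvle {m : ℕ → Measure ℝ} {m₀ : Measure ℝ}
    (hm : ∀ n v, ‖v‖ ≤ j → TVLE (ν n v) (m n)) (hm₀ : ∀ v, ‖v‖ ≤ j → TVLE (ν₀ v) m₀)
    (hmeq : ∀ ε > (0 : ℝ), ∃ δ > (0 : ℝ), ∀ s t : ℝ, 0 ≤ t - s → t - s < δ →
      (∀ n, m n (Icc s t) < ENNReal.ofReal ε) ∧ m₀ (Icc s t) < ENNReal.ofReal ε) :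
    UniformlySmallOnShortIntervals ν ν₀ j := fun ε hε => by
  obtain ⟨δ, hδ, h⟩ := hmeq ε hε
  exact ⟨δ, hδ, fun s t hst hst' v hv => ⟨fun n => (hm n v hv).abs_lt_of_lt_ofReal
    ((h s t hst hst').1 n), (hm₀ v hv).abs_lt_of_lt_ofReal (h s t hst hst').2⟩⟩

theorem SigmaThetaTendsto.eventually_abs_sub_lt_of_const (hΘ : IsSuitableModuli Θ)
    (hconv : SigmaThetaTendsto Θ ν ν₀) (hν : ∀ n v, IsBMeasure (ν n v))
    (hν₀ : ∀ v, IsBMeasure (ν₀ v)) {p r : ℚ} (hpr : p < r) {ε : ℝ} (hε : 0 < ε) :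
    ∀ᶠ n in atTop, ∀ v : E, ‖v‖ ≤ j → |ν n v (Icc p r) - ν₀ v (Icc p r)| < ε := by
  filter_upwards [eventually_atTop.2 (hconv j p r hpr ε hε)] with n hn v hv
  exact hn _ (const_mem_KSet hΘ hpr hv) _ _
    (isCurveIntegral_of_eqOn_const (hν n) (eqOn_refl _ _))
    (isCurveIntegral_of_eqOn_const hν₀ (eqOn_refl _ _))

theorem SigmaThetaTendsto.eventually_abs_sub_Icc_left_lt (hΘ : IsSuitableModuli Θ)
    (hconv : SigmaThetaTendsto Θ ν ν₀) (hν : ∀ n v, IsBMeasure (ν n v))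
    (hν₀ : ∀ v, IsBMeasure (ν₀ v)) (hsmall : UniformlySmallOnShortIntervals ν ν₀ j) {p : ℚ}
    {c : ℝ} (hpc : p < c) {cs : ℕ → ℝ} (hcs : Tendsto cs atTop (𝓝 c)) {ε : ℝ} (hε : 0 < ε) :
    ∀ᶠ n in atTop, ∀ v : E, ‖v‖ ≤ j → |ν n v (Icc p (cs n)) - ν₀ v (Icc p c)| < ε := by
  obtain ⟨δ, hδ, hsmall⟩ := hsmall (ε / 3) (by positivity)
  obtain ⟨r, hr, hrc⟩ := exists_rat_btwn (max_lt hpc (sub_lt_self c hδ))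
  rw [max_lt_iff] at hr
  filter_upwards [hconv.eventually_abs_sub_lt_of_const hΘ hν hν₀ (Rat.cast_lt.1 hr.1)
      (ε := ε / 3) (by positivity),
    hcs.eventually (Ioo_mem_nhds hrc (by linarith : c < r + δ))] with n hn hcn v hv
  rw [(hν n v).map_Icc_eq_add hr.1.le hcn.1.le, (hν₀ v).map_Icc_eq_add hr.1.le hrc.le]
  have h₁ := (hsmall r (cs n) (by linarith [hcn.1]) (by linarith [hcn.2]) v hv).1 n
  have h₂ := (hsmall r c (by linarith) (by linarith) v hv).2
  have h₃ := hn v hv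
  rw [abs_lt] at h₁ h₂ h₃ ⊢
  constructor <;> linarith

theorem SigmaThetaTendsto.eventually_abs_sub_Icc_right_lt (hΘ : IsSuitableModuli Θ)
    (hconv : SigmaThetaTendsto Θ ν ν₀) (hν : ∀ n v, IsBMeasure (ν n v))
    (hν₀ : ∀ v, IsBMeasure (ν₀ v)) (hsmall : UniformlySmallOnShortIntervals ν ν₀ j) {p : ℚ}
    {c : ℝ} (hcp : c < p) {cs : ℕ → ℝ} (hcs : Tendsto cs atTop (𝓝 c)) {ε : ℝ} (hε : 0 < ε) :
    ∀ᶠ n in atTop, ∀ v : E, ‖v‖ ≤ j → |ν n v (Icc (cs n) p) - ν₀ v (Icc c p)| < ε := by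
  obtain ⟨δ, hδ, hsmall⟩ := hsmall (ε / 3) (by positivity)
  obtain ⟨r, hcr, hr⟩ := exists_rat_btwn (lt_min hcp (lt_add_of_pos_right c hδ))
  rw [lt_min_iff] at hr
  filter_upwards [hconv.eventually_abs_sub_lt_of_const hΘ hν hν₀ (Rat.cast_lt.1 hr.1)
      (ε := ε / 3) (by positivity),
    hcs.eventually (Ioo_mem_nhds (by linarith : r - δ < c) hcr)] with n hn hcn v hv
  rw [(hν n v).map_Icc_eq_add hcn.2.le hr.1.le, (hν₀ v).map_Icc_eq_add hcr.le hr.1.le]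
  have h₁ := (hsmall (cs n) r (by linarith [hcn.2]) (by linarith [hcn.1]) v hv).1 n
  have h₂ := (hsmall c r (by linarith) (by linarith) v hv).2
  have h₃ := hn v hv
  rw [abs_lt] at h₁ h₂ h₃ ⊢
  constructor <;> linarith

end Edges

theorem stmt14 {N : ℕ} (ω : ℕ → ℝ → ℝ) (hω : IsModulusFamily ω)
    (Θ : ℕ → ℚ → ℚ → ℝ → ℝ) (hΘ : IsSuitableModuli Θ)
    (ν : ℕ → EuclideanSpace ℝ (Fin N) → Set ℝ → ℝ)
    (ν₀ : EuclideanSpace ℝ (Fin N) → Set ℝ → ℝ)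
    (hν : ∀ n, IsParamBMeasure ω (ν n)) (hν₀ : IsParamBMeasure ω ν₀)
    (mB : ℕ → ℕ → Measure ℝ) (mB0 : ℕ → Measure ℝ)
    (hmB : ∀ n j, 1 ≤ j → HasMBound (ν n) j (mB n j))
    (hmB0 : ∀ j, 1 ≤ j → HasMBound ν₀ j (mB0 j))
    (hmeq : ∀ j, 1 ≤ j → ∀ ε > (0 : ℝ), ∃ δ > (0 : ℝ), ∀ s t : ℝ,
      0 ≤ t - s → t - s < δ →
        (∀ n, mB n j (Set.Icc s t) < ENNReal.ofReal ε) ∧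
        mB0 j (Set.Icc s t) < ENNReal.ofReal ε)
    (tseq : ℕ → ℝ) (t₀ : ℝ) (ht : Tendsto tseq atTop (𝓝 t₀))
    (hconv : SigmaThetaTendsto Θ ν ν₀) :
    SigmaThetaTendsto Θ (fun n => BTranslate (ν n) (tseq n)) (BTranslate ν₀ t₀) := by
  intro j q₁ q₂ hq ε hε
  have hq' : (q₁ : ℝ) < q₂ := Rat.cast_lt.2 hq
  obtain ⟨p₁, hp₁⟩ := exists_rat_lt (min (q₁ : ℝ) (q₁ + t₀))
  obtain ⟨p₂, hp₂⟩ := exists_rat_gt (max (q₂ : ℝ) (q₂ + t₀))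
  rw [lt_min_iff] at hp₁
  rw [max_lt_iff] at hp₂
  have hp : (p₁ : ℝ) < p₂ := by linarith
  have hbν : ∀ n v, IsBMeasure (ν n v) := fun n => (hν n).1
  have hsmall : UniformlySmallOnShortIntervals ν ν₀ (j + 1) :=
    uniformlySmallOnShortIntervals_of_tvle (fun n => (hmB n _ le_add_self).2)
      (hmB0 _ le_add_self).2 (hmeq _ le_add_self)
  refine eventually_atTop.1 ?_
  filter_upwards
    [eventually_atTop.2 (hconv (j + 1) p₁ p₂ (Rat.cast_lt.1 hp) (ε / 5) (by positivity)),
    hν₀.eventually_abs_sub_lt_of_extendShift hω hΘ hq hq'.le hp ht (ε := ε / 5) (by positivity),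
    hconv.eventually_abs_sub_Icc_left_lt hΘ hbν hν₀.1 hsmall hp₁.2 (ht.const_add (q₁ : ℝ))
      (ε := ε / 5) (by positivity),
    hconv.eventually_abs_sub_Icc_right_lt hΘ hbν hν₀.1 hsmall hp₂.2 (ht.const_add (q₂ : ℝ))
      (ε := ε / 5) (by positivity),
    (ht.const_add (q₁ : ℝ)).eventually_const_lt hp₁.2,
    (ht.const_add (q₂ : ℝ)).eventually_lt_const hp₂.2]
    with n hwindow hshift hleft hright hn₁ hn₂ y hy L L₀ hL hL₀
  have hK : ∀ t, extendShift y hq'.le t ∈ KSet _ Θ (j + 1) p₁ p₂ := fun t =>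
    extendShift_mem_KSet hΘ hq hy hq'.le t (Nat.le_succ j) (Rat.cast_le.1 hp₁.1.le)
      (Rat.cast_le.1 hp₂.1.le)
  obtain ⟨W, hW⟩ := (hν n).exists_isCurveIntegral hω hp (hK (tseq n)).1
  obtain ⟨W', hW'⟩ := hν₀.exists_isCurveIntegral hω hp (hK (tseq n)).1
  obtain ⟨W₀, hW₀⟩ := hν₀.exists_isCurveIntegral hω hp (hK t₀).1
  have e := hL.eq_add_add_of_bTranslate (hν n).1 hq' hn₁ hn₂ hW
  have e₀ := hL₀.eq_add_add_of_bTranslate hν₀.1 hq' hp₁.2 hp₂.2 hW₀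
  have h₁ := hwindow _ (hK _) _ _ hW hW'
  have h₂ := hshift y hy _ _ hW' hW₀
  have h₃ := hleft (y q₁) ((hy.2.1 _ (left_mem_Icc.2 hq'.le)).trans (by simp))
  have h₄ := hright (y q₂) ((hy.2.1 _ (right_mem_Icc.2 hq'.le)).trans (by simp))
  rw [abs_lt] at h₁ h₂ h₃ h₄ ⊢
  constructor <;> linarith
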